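/- Let μ ∈ ℝ and ν = μ. For every t > 0 and x, y ≥ 0, the partial derivative ∂_y H(t;x,y) exists and G(t;x,y) + ∂_y H(t;x,y) = (1/√t) φ((x−y+μt)/√t) − (e^{2μy}/√t)·[ (1+4μ²t) φ((x+y+μt)/√t) − 4μ(1+μ(x+y)+μ²t)·√t · Ψ((x+y+μt)/√t) ]. -/

import Mathlib

open MeasureTheory Set Filter

/-- Standard normal density. -/
noncomputable def phi (x : ℝ) : ℝ := (1 / Real.sqrt (2 * Real.pi)) * Real.exp (-x ^ 2 / 2)

/-- Standard normal tail function. -/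
noncomputable def Psi (x : ℝ) : ℝ := ∫ y in Set.Ioi x, phi y

/-- The kernel `G(t;x,y)` with drift parameter `μ`. -/
noncomputable def Gker (μ t x y : ℝ) : ℝ :=
  (1 / Real.sqrt t) *
      (Real.exp (2 * μ * y) * phi ((x + y + μ * t) / Real.sqrt t) +
        phi ((x - y + μ * t) / Real.sqrt t)) -
    2 * μ * Real.exp (2 * μ * y) * Psi ((x + y + μ * t) / Real.sqrt t)

/-- The kernel `H(t;x,y)` with parameters `μ, ν`. -/
noncomputable def Hker (μ ν t x y : ℝ) : ℝ :=
  if ν = μ then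
    2 * Real.exp (2 * μ * y) *
      ((1 + μ * (x + y + μ * t)) * Psi ((x + y + μ * t) / Real.sqrt t) -
        μ * Real.sqrt t * phi ((x + y + μ * t) / Real.sqrt t))
  else
    Real.exp (2 * μ * y) / (ν - μ) *
      ((2 * ν - μ) * Real.exp (2 * (ν - μ) * (x + y + ν * t)) *
          Psi ((x + y + (2 * ν - μ) * t) / Real.sqrt t) -
        μ * Psi ((x + y + μ * t) / Real.sqrt t))

/-- The density `g(t;b,s)` of `(B_t^{-μ}, S_t^{-μ})`, vanishing off `{b ≤ s, 0 ≤ s}`. -/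
noncomputable def gker (μ t b s : ℝ) : ℝ :=
  if b ≤ s ∧ 0 ≤ s then
    Real.sqrt (2 / Real.pi) * t ^ (-(3 : ℝ) / 2) * (2 * s - b) *
      Real.exp (-(2 * s - b) ^ 2 / (2 * t) - μ * (b + μ * t / 2))
  else 0

/-- Spatial derivative (one-sided at `x = 0`). -/
noncomputable def ux (u : ℝ → ℝ → ℝ) (t x : ℝ) : ℝ :=
  derivWithin (fun z => u t z) (Set.Ici 0) x

/-- Second spatial derivative (one-sided at `x = 0`). -/
noncomputable def uxx (u : ℝ → ℝ → ℝ) (t x : ℝ) : ℝ :=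
  derivWithin (fun z => ux u t z) (Set.Ici 0) x

/-- Time derivative. -/
noncomputable def ut (u : ℝ → ℝ → ℝ) (t x : ℝ) : ℝ :=
  deriv (fun s => u s x) t

/-- `u` is a solution of the Stroock–Williams problem with parameters `μ, ν`
and initial data `f`. -/
def IsSWSolution (μ ν : ℝ) (f : ℝ → ℝ) (u : ℝ → ℝ → ℝ) : Prop :=
  ContDiffOn ℝ (⊤ : ℕ∞) (fun p : ℝ × ℝ => u p.1 p.2) (Set.Ioi 0 ×ˢ Set.Ici 0) ∧
  (∀ T > (0 : ℝ),
    ContinuousOn (fun p : ℝ × ℝ => u p.1 p.2) (Set.Icc 0 T ×ˢ Set.Ici 0) ∧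
    ContinuousOn (fun p : ℝ × ℝ => ux u p.1 p.2) (Set.Icc 0 T ×ˢ Set.Ici 0) ∧
    ∃ C : ℝ, ∀ p ∈ Set.Icc (0 : ℝ) T ×ˢ Set.Ici (0 : ℝ),
      |u p.1 p.2| ≤ C ∧ |ux u p.1 p.2| ≤ C) ∧
  (∀ t > (0 : ℝ), Filter.Tendsto (fun x => u t x) Filter.atTop (nhds 0)) ∧
  (∀ t > (0 : ℝ), ∀ x ≥ (0 : ℝ), ut u t x = μ * ux u t x + (1 / 2) * uxx u t x) ∧
  (∀ x ≥ (0 : ℝ), u 0 x = f x) ∧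
  (∀ t > (0 : ℝ), ut u t 0 = ν * ux u t 0)

/-- `f` is admissible initial data: `C¹` on `[0,∞)` with `f` and `f'` bounded
and `f(x) → 0` as `x → ∞`. -/
def IsInitialData (f : ℝ → ℝ) : Prop :=
  ContDiffOn ℝ 1 f (Set.Ici 0) ∧
  (∃ C : ℝ, ∀ x ∈ Set.Ici (0 : ℝ), |f x| ≤ C ∧ |derivWithin f (Set.Ici 0) x| ≤ C) ∧
  Filter.Tendsto f Filter.atTop (nhds 0)


lemma continuous_phi : Continuous phi := by
  unfold phi
  fun_prop

lemma integrable_phi : Integrable phi := by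
  have h := integrable_exp_neg_mul_sq (by norm_num : (0:ℝ) < 1/2)
  have : phi = fun x => (1 / Real.sqrt (2 * Real.pi)) * Real.exp (-(1/2) * x ^ 2) := by
    funext x; unfold phi; ring_nf
  rw [this]
  exact h.const_mul _

lemma hasDerivAt_phi (a : ℝ) : HasDerivAt phi (-a * phi a) a := by
  have h1 : HasDerivAt (fun x : ℝ => -x ^ 2 / 2) (-a) a := by
    have := ((hasDerivAt_pow 2 a).neg.div_const 2)
    simpa using this.congr_deriv (by ring)
  have h2 := (h1.exp).const_mul (1 / Real.sqrt (2 * Real.pi))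
  unfold phi
  exact h2.congr_deriv (by ring)

lemma Psi_eq (x : ℝ) : Psi x = Psi 0 - ∫ u in (0:ℝ)..x, phi u := by
  have hi := integrable_phi
  have h0 : (∫ u in Set.Iic (0:ℝ), phi u) + Psi 0 = ∫ u, phi u :=
    intervalIntegral.integral_Iic_add_Ioi hi.integrableOn hi.integrableOn
  have hx : (∫ u in Set.Iic x, phi u) + Psi x = ∫ u, phi u :=
    intervalIntegral.integral_Iic_add_Ioi hi.integrableOn hi.integrableOn
  have hs : (∫ u in Set.Iic x, phi u) - ∫ u in Set.Iic (0:ℝ), phi u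
      = ∫ u in (0:ℝ)..x, phi u :=
    intervalIntegral.integral_Iic_sub_Iic hi.integrableOn hi.integrableOn
  linarith

lemma hasDerivAt_Psi (a : ℝ) : HasDerivAt Psi (-phi a) a := by
  have hI : HasDerivAt (fun u : ℝ => ∫ s in (0:ℝ)..u, phi s) (phi a) a :=
    (intervalIntegral.integral_hasStrictDerivAt_right
      integrable_phi.intervalIntegrable
      (continuous_phi.stronglyMeasurableAtFilter _ _)
      continuous_phi.continuousAt).hasDerivAt
  have h := hI.const_sub (Psi 0)
  have : Psi = fun u => Psi 0 - ∫ s in (0:ℝ)..u, phi s := funext Psi_eq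
  rw [this]
  exact h

/-- closed formula for `G + ∂_y H` when `ν = μ`. -/
theorem G_add_Hy_formula_of_eq (μ : ℝ) :
    ∀ t > (0 : ℝ), ∀ x ≥ (0 : ℝ), ∀ y ≥ (0 : ℝ),
      HasDerivWithinAt (fun z => Hker μ μ t x z)
        ((1 / Real.sqrt t) * phi ((x - y + μ * t) / Real.sqrt t) -
          Real.exp (2 * μ * y) / Real.sqrt t *
            ((1 + 4 * μ ^ 2 * t) * phi ((x + y + μ * t) / Real.sqrt t) -
              4 * μ * (1 + μ * (x + y) + μ ^ 2 * t) * Real.sqrt t *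
                Psi ((x + y + μ * t) / Real.sqrt t)) -
          Gker μ t x y)
        (Set.Ici 0) y := by
  intro t ht x hx y hy
  have hs : 0 < Real.sqrt t := Real.sqrt_pos.mpr ht
  set s : ℝ := Real.sqrt t with hsdef
  have hs2 : s ^ 2 = t := Real.sq_sqrt ht.le
  set a : ℝ := (x + y + μ * t) / s with ha
  have hw : HasDerivAt (fun z : ℝ => (x + z + μ * t) / s) (1 / s) y := by
    have : HasDerivAt (fun z : ℝ => x + z + μ * t) 1 y := by
      simpa using ((hasDerivAt_id y).const_add x).add_const (μ * t)
    simpa using this.div_const s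
  have hPsi : HasDerivAt (fun z : ℝ => Psi ((x + z + μ * t) / s)) (-phi a * (1 / s)) y :=
    by have h := (hasDerivAt_Psi a).comp y hw; exact h
  have hphi : HasDerivAt (fun z : ℝ => phi ((x + z + μ * t) / s)) (-a * phi a * (1 / s)) y :=
    by have h := (hasDerivAt_phi a).comp y hw; exact h
  have hexp : HasDerivAt (fun z : ℝ => Real.exp (2 * μ * z)) (Real.exp (2 * μ * y) * (2 * μ)) y := by
    have : HasDerivAt (fun z : ℝ => 2 * μ * z) (2 * μ) y := by
      simpa using (hasDerivAt_id y).const_mul (2 * μ)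
    exact this.exp
  have hlin : HasDerivAt (fun z : ℝ => 1 + μ * (x + z + μ * t)) μ y := by
    have : HasDerivAt (fun z : ℝ => x + z + μ * t) 1 y := by
      simpa using ((hasDerivAt_id y).const_add x).add_const (μ * t)
    simpa using (this.const_mul μ).const_add 1
  have hinner : HasDerivAt
      (fun z : ℝ => (1 + μ * (x + z + μ * t)) * Psi ((x + z + μ * t) / s)
        - μ * s * phi ((x + z + μ * t) / s))
      (μ * Psi a + (1 + μ * (x + y + μ * t)) * (-phi a * (1 / s))
        - μ * s * (-a * phi a * (1 / s))) y :=
    (hlin.mul hPsi).sub (hphi.const_mul (μ * s))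
  have hF : HasDerivAt (fun z : ℝ => Hker μ μ t x z)
      (2 * (Real.exp (2 * μ * y) * (2 * μ)) *
          ((1 + μ * (x + y + μ * t)) * Psi a - μ * s * phi a)
        + 2 * Real.exp (2 * μ * y) *
          (μ * Psi a + (1 + μ * (x + y + μ * t)) * (-phi a * (1 / s))
            - μ * s * (-a * phi a * (1 / s)))) y := by
    have := (hexp.const_mul 2).fun_mul hinner
    simpa only [Hker, eq_self_iff_true, if_true, ← hsdef, ← ha] using this
  have heq : (2 * (Real.exp (2 * μ * y) * (2 * μ)) *
          ((1 + μ * (x + y + μ * t)) * Psi a - μ * s * phi a)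
        + 2 * Real.exp (2 * μ * y) *
          (μ * Psi a + (1 + μ * (x + y + μ * t)) * (-phi a * (1 / s))
            - μ * s * (-a * phi a * (1 / s))))
      = ((1 / Real.sqrt t) * phi ((x - y + μ * t) / Real.sqrt t) -
          Real.exp (2 * μ * y) / Real.sqrt t *
            ((1 + 4 * μ ^ 2 * t) * phi ((x + y + μ * t) / Real.sqrt t) -
              4 * μ * (1 + μ * (x + y) + μ ^ 2 * t) * Real.sqrt t *
                Psi ((x + y + μ * t) / Real.sqrt t)) -
          Gker μ t x y) := by
    unfold Gker
    rw [← hsdef, ha, ← hs2]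
    field_simp
    ring
  rw [heq] at hF
  exact hF.hasDerivWithinAt
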